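/- arXiv:math/0205293 — 3 statements merged into one kernel-verified Lean document; each statement's English description precedes it below -/
import Mathlib

section
/- Every coefficient of D_r is nonnegative; that is, for every q ∈ ℚ the coefficient of L^q in the determinant D_r is ≥ 0. (Theorem 5.10(i).) -/
open Finset

/-- The ring of Laurent polynomials with rational exponents in a formal variable `L`. -/
noncomputable abbrev LaurentQ := AddMonoidAlgebra ℤ ℚ

/-- The monomial `L^q`. -/
noncomputable def Lpow (q : ℚ) : LaurentQ := AddMonoidAlgebra.single q 1

/-- `K i = ∑_{j=0}^{κ_i − 1} L^{j·a_i}`. -/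
noncomputable def Kpoly (κ : ℕ → ℕ) (a : ℕ → ℚ) (i : ℕ) : LaurentQ :=
  ∑ j ∈ Finset.range (κ i), Lpow ((j : ℚ) * a i)

/-- The `(i,j)` entry (with `1`-based indices) of the non-symmetric `L`-deformation `M`
of the intersection matrix of the chain. -/
noncomputable def entry (κ : ℕ → ℕ) (a : ℕ → ℚ) (i j : ℕ) : LaurentQ :=
  if i = j then Kpoly κ a i
  else if Odd i then
    if j + 1 = i then -(Lpow (a (i + 1)))
    else if j = i + 1 then -(Lpow (a (i + 2)))
    else if j = i + 2 then Lpow (a (i + 1)) - 1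
    else 0
  else
    if j + 2 = i then Lpow (a (i - 1)) - 1
    else if j + 1 = i then -(Lpow (a (i - 2)))
    else if j = i + 1 then -(Lpow (a (i - 1)))
    else 0

/-- `D_s`: the determinant of the top-left `s×s` submatrix of `M`. -/
noncomputable def Dpoly (κ : ℕ → ℕ) (a : ℕ → ℚ) (s : ℕ) : LaurentQ :=
  Matrix.det (Matrix.of fun i j : Fin s => entry κ a ((i : ℕ) + 1) ((j : ℕ) + 1))

namespace D510


lemma Lpow_mul (p q : ℚ) : Lpow p * Lpow q = Lpow (p + q) := by
  simp [Lpow, AddMonoidAlgebra.single_mul_single]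

lemma Lpow_zero : Lpow 0 = 1 := rfl

/-- partial geometric sum -/
noncomputable def Kp (m : ℕ) (q : ℚ) : LaurentQ := ∑ j ∈ Finset.range m, Lpow ((j : ℚ) * q)

lemma Kpoly_eq (κ : ℕ → ℕ) (a : ℕ → ℚ) (i : ℕ) : Kpoly κ a i = Kp (κ i) (a i) := rfl

lemma Kp_succ (m : ℕ) (q : ℚ) : Kp (m + 1) q = Kp m q + Lpow ((m : ℚ) * q) := by
  simp [Kp, Finset.sum_range_succ]

variable (κ : ℕ → ℕ) (a : ℕ → ℚ)

/-- the subtraction-free pair (Dn, En) -/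
noncomputable def DE : ℕ → LaurentQ × LaurentQ
  | 0 => (1, 1)
  | s + 1 =>
    (Kp (κ (s+1) - 1) (a (s+1)) * (DE s).1 + Lpow (((κ (s+1) - 1 : ℕ) : ℚ) * a (s+1)) * (DE s).2,
     Kp (κ (s+1) - 2) (a (s+1)) * (DE s).1 + Lpow (((κ (s+1) - 2 : ℕ) : ℚ) * a (s+1)) * (DE s).2)

noncomputable def Dn (s : ℕ) : LaurentQ := (DE κ a s).1
noncomputable def En (s : ℕ) : LaurentQ := (DE κ a s).2

noncomputable def G (m : ℕ) : LaurentQ := Lpow (a m - a (m+1)) * (En κ a m - Dn κ a m)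

lemma Dn_zero : Dn κ a 0 = 1 := rfl
lemma En_zero : En κ a 0 = 1 := rfl
lemma Dn_succ (s : ℕ) : Dn κ a (s+1) =
    Kp (κ (s+1) - 1) (a (s+1)) * Dn κ a s + Lpow (((κ (s+1) - 1 : ℕ) : ℚ) * a (s+1)) * En κ a s := rfl
lemma En_succ (s : ℕ) : En κ a (s+1) =
    Kp (κ (s+1) - 2) (a (s+1)) * Dn κ a s + Lpow (((κ (s+1) - 2 : ℕ) : ℚ) * a (s+1)) * En κ a s := rfl

lemma G_zero : G κ a 0 = 0 := by
  simp [G, En_zero, Dn_zero]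

/-- K2 : En − Dn reduction -/
lemma K2 (m : ℕ) (hk : 2 ≤ κ (m+1)) :
    En κ a (m+1) - Dn κ a (m+1)
      = -(Lpow (((κ (m+1) - 2 : ℕ) : ℚ) * a (m+1)) *
          (Dn κ a m + (Lpow (a (m+1)) - 1) * En κ a m)) := by
  have h1 : κ (m+1) - 1 = (κ (m+1) - 2) + 1 := by omega
  have h2 : (((κ (m+1) - 1 : ℕ) : ℚ)) * a (m+1)
      = ((κ (m+1) - 2 : ℕ) : ℚ) * a (m+1) + a (m+1) := by
    rw [h1]; push_cast; ring
  have h3 : Lpow (((κ (m+1) - 1 : ℕ) : ℚ) * a (m+1))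
      = Lpow (((κ (m+1) - 2 : ℕ) : ℚ) * a (m+1)) * Lpow (a (m+1)) := by
    rw [Lpow_mul, ← h2]
  rw [Dn_succ, En_succ, h1, Kp_succ]
  have h4 : (((κ (m+1) - 2 + 1 : ℕ)) : ℚ) * a (m+1)
      = ((κ (m+1) - 2 : ℕ) : ℚ) * a (m+1) + a (m+1) := by push_cast; ring
  rw [h4, ← Lpow_mul]
  ring

/-- K3 : recursion for G (uses the chain relation at m+1) -/
lemma K3 (m : ℕ) (hk : 2 ≤ κ (m+1)) (hc : ((κ (m+1) : ℕ) : ℚ) * a (m+1) = a m + a (m+2)) :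
    G κ a (m+1) = -(Lpow (a m) * Dn κ a m) - (Lpow (a (m+1)) - 1) * G κ a m := by
  have hexp : Lpow (a (m+1) - a (m+2)) * Lpow (((κ (m+1) - 2 : ℕ) : ℚ) * a (m+1))
      = Lpow (a m - a (m+1)) := by
    rw [Lpow_mul]
    congr 1
    have : ((κ (m+1) - 2 : ℕ) : ℚ) = (κ (m+1) : ℚ) - 2 := by
      push_cast [Nat.cast_sub (by omega : 2 ≤ κ (m+1))]; ring
    rw [this]
    linarith [hc]
  have hu : Lpow (a m - a (m+1)) * Lpow (a (m+1)) = Lpow (a m) := by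
    rw [Lpow_mul]; ring_nf
  rw [G, K2 κ a m hk]
  rw [show Lpow (a (m+1) - a (m+2)) *
      -(Lpow (((κ (m+1) - 2 : ℕ) : ℚ) * a (m+1)) * (Dn κ a m + (Lpow (a (m+1)) - 1) * En κ a m))
      = -((Lpow (a (m+1) - a (m+2)) * Lpow (((κ (m+1) - 2 : ℕ) : ℚ) * a (m+1))) *
        (Dn κ a m + (Lpow (a (m+1)) - 1) * En κ a m)) from by ring, hexp, G]
  linear_combination (-(Dn κ a m)) * hu

/-- K4 : the D recursion (uses the chain relation at s+1) -/
lemma K4 (s : ℕ) (hk : 2 ≤ κ (s+1)) (hc : ((κ (s+1) : ℕ) : ℚ) * a (s+1) = a s + a (s+2)) :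
    Dn κ a (s+1) = Kp (κ (s+1)) (a (s+1)) * Dn κ a s + Lpow (a (s+2)) * G κ a s := by
  have h1 : κ (s+1) = (κ (s+1) - 1) + 1 := by omega
  have h2 : Kp (κ (s+1)) (a (s+1))
      = Kp (κ (s+1) - 1) (a (s+1)) + Lpow (((κ (s+1) - 1 : ℕ) : ℚ) * a (s+1)) := by
    rw [h1, Kp_succ]; rw [← h1]
  have h3 : Lpow (a (s+2)) * Lpow (a s - a (s+1)) = Lpow (((κ (s+1) - 1 : ℕ) : ℚ) * a (s+1)) := by
    rw [Lpow_mul]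
    congr 1
    have : ((κ (s+1) - 1 : ℕ) : ℚ) = (κ (s+1) : ℚ) - 1 := by
      push_cast [Nat.cast_sub (by omega : 1 ≤ κ (s+1))]; ring
    rw [this]; linarith [hc]
  rw [Dn_succ, h2, G]
  linear_combination (Dn κ a s - En κ a s) * h3

/-- coefficientwise nonnegativity -/
def NN (p : LaurentQ) : Prop := ∀ q : ℚ, 0 ≤ p.coeff q

lemma NN_add {p q : LaurentQ} (hp : NN p) (hq : NN q) : NN (p + q) := by
  intro x; have h1 := hp x; have h2 := hq x
  have : (p + q).coeff x = p.coeff x + q.coeff x := rfl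
  omega

lemma NN_mul {p q : LaurentQ} (hp : NN p) (hq : NN q) : NN (p * q) := by
  intro x
  rw [AddMonoidAlgebra.mul_apply, Finsupp.sum]
  apply Finset.sum_nonneg
  intro a1 _
  rw [Finsupp.sum]
  apply Finset.sum_nonneg
  intro a2 _
  by_cases h : a1 + a2 = x
  · simpa [h] using mul_nonneg (hp a1) (hq a2)
  · simp [h]

lemma NN_Lpow (q : ℚ) : NN (Lpow q) := by
  intro x
  by_cases h : q = x <;> simp [Lpow, AddMonoidAlgebra.coeff_single, Finsupp.single_apply, h]

lemma NN_one : NN (1 : LaurentQ) := NN_Lpow 0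

lemma NN_Kp (m : ℕ) (q : ℚ) : NN (Kp m q) := by
  induction m with
  | zero => intro x; simp [Kp]
  | succ n ih => rw [Kp_succ]; exact NN_add ih (NN_Lpow _)

lemma NN_Dn_En (s : ℕ) : NN (Dn κ a s) ∧ NN (En κ a s) := by
  induction s with
  | zero => exact ⟨NN_one, NN_one⟩
  | succ n ih =>
    exact ⟨NN_add (NN_mul (NN_Kp _ _) ih.1) (NN_mul (NN_Lpow _) ih.2),
           NN_add (NN_mul (NN_Kp _ _) ih.1) (NN_mul (NN_Lpow _) ih.2)⟩




-- entry evaluation helpers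
lemma entry_zl_odd {i j : ℕ} (h : i % 2 = 1) (hj : j + 2 ≤ i) : entry κ a i j = 0 := by
  simp only [entry, Nat.odd_iff]
  split_ifs <;> first | rfl | omega

lemma entry_zl_even {i j : ℕ} (h : i % 2 = 0) (hj : j + 3 ≤ i) : entry κ a i j = 0 := by
  simp only [entry, Nat.odd_iff]
  split_ifs <;> first | rfl | omega

lemma entry_zr {i j : ℕ} (hj : i + 3 ≤ j) : entry κ a i j = 0 := by
  simp only [entry, Nat.odd_iff]
  split_ifs <;> first | rfl | omega

lemma entry_zr2_even {i : ℕ} (h : i % 2 = 0) : entry κ a i (i + 2) = 0 := by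
  simp only [entry, Nat.odd_iff]
  split_ifs <;> first | rfl | omega

lemma entry_diag (i : ℕ) : entry κ a i i = Kpoly κ a i := by
  simp [entry]

lemma entry_r1_odd {i : ℕ} (h : i % 2 = 1) : entry κ a i (i + 1) = -(Lpow (a (i + 2))) := by
  simp only [entry, Nat.odd_iff]
  split_ifs <;> first | rfl | omega

lemma entry_r1_even {i : ℕ} (h : i % 2 = 0) : entry κ a i (i + 1) = -(Lpow (a (i - 1))) := by
  simp only [entry, Nat.odd_iff]
  split_ifs <;> first | rfl | omega

lemma entry_r2_odd {i : ℕ} (h : i % 2 = 1) : entry κ a i (i + 2) = Lpow (a (i + 1)) - 1 := by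
  simp only [entry, Nat.odd_iff]
  split_ifs <;> first | rfl | omega

lemma entry_l1_odd {j : ℕ} (h : (j + 1) % 2 = 1) : entry κ a (j + 1) j = -(Lpow (a (j + 2))) := by
  simp only [entry, Nat.odd_iff]
  split_ifs <;> first | rfl | omega

lemma entry_l1_even {j : ℕ} (h : (j + 1) % 2 = 0) : entry κ a (j + 1) j = -(Lpow (a (j - 1))) := by
  have : (j+1) - 2 = j - 1 := by omega
  simp only [entry, Nat.odd_iff, this]
  split_ifs <;> first | rfl | omega

lemma entry_l2_even {j : ℕ} (h : j % 2 = 0) : entry κ a (j + 2) j = Lpow (a (j + 1)) - 1 := by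
  have : (j+2) - 1 = j + 1 := by omega
  simp only [entry, Nat.odd_iff, this]
  split_ifs <;> first | rfl | omega

-- matrices
noncomputable def Dmat (s : ℕ) : Matrix (Fin s) (Fin s) LaurentQ :=
  Matrix.of fun i j => entry κ a ((i : ℕ) + 1) ((j : ℕ) + 1)

lemma Dpoly_eq (s : ℕ) : Dpoly κ a s = (Dmat κ a s).det := rfl

noncomputable def Ymat (s : ℕ) : Matrix (Fin s) (Fin s) LaurentQ :=
  Matrix.of fun i j => entry κ a ((i : ℕ) + 1) (if (j : ℕ) + 1 = s then s + 1 else (j : ℕ) + 1)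

noncomputable def Zmat (s : ℕ) : Matrix (Fin s) (Fin s) LaurentQ :=
  Matrix.of fun i j => entry κ a ((i : ℕ) + 1)
    (if (j : ℕ) + 1 = s then s + 1 else if (j : ℕ) + 2 = s then s else (j : ℕ) + 1)

noncomputable def Xmat (s : ℕ) : Matrix (Fin s) (Fin s) LaurentQ :=
  Matrix.of fun i j => entry κ a (if (i : ℕ) + 1 = s then s + 1 else (i : ℕ) + 1) ((j : ℕ) + 1)

-- LY-odd : for odd t = n+1 : det (Ymat t) = -(Lpow (a (t+2)) * Dpoly (t-1))
lemma LYodd (n : ℕ) (hn : (n + 1) % 2 = 1) :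
    (Ymat κ a (n + 1)).det = -(Lpow (a (n + 3)) * Dpoly κ a n) := by
  rw [Matrix.det_succ_column _ (Fin.last n), Fin.sum_univ_castSucc]
  have hz : ∀ i : Fin n,
      (-1 : LaurentQ) ^ ((i.castSucc : ℕ) + (Fin.last n : ℕ)) *
        Ymat κ a (n+1) i.castSucc (Fin.last n) *
        ((Ymat κ a (n+1)).submatrix i.castSucc.succAbove (Fin.last n).succAbove).det = 0 := by
    intro i
    have hcol : Ymat κ a (n+1) i.castSucc (Fin.last n) = 0 := by
      have hlt : (i : ℕ) < n := i.isLt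
      simp only [Ymat, Matrix.of_apply, Fin.coe_castSucc, Fin.val_last, eq_self_iff_true, if_true]
      by_cases hc : (i : ℕ) + 1 + 3 ≤ n + 2
      · exact entry_zr κ a hc
      · have hieq : (i : ℕ) + 1 = n := by omega
        have : n % 2 = 0 := by omega
        rw [hieq]
        exact entry_zr2_even κ a this
    rw [hcol]; ring
  rw [Finset.sum_congr rfl (fun i _ => hz i), Finset.sum_const_zero, zero_add]
  have hsub : (Ymat κ a (n+1)).submatrix (Fin.last n).succAbove (Fin.last n).succAbove
      = Dmat κ a n := by
    ext i j : 2
    simp only [Matrix.submatrix_apply, Fin.succAbove_last, Ymat, Dmat, Matrix.of_apply,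
      Fin.coe_castSucc]
    rw [if_neg (by omega : ¬ ((j : ℕ) + 1 = n + 1))]
  have hentry : Ymat κ a (n+1) (Fin.last n) (Fin.last n) = -(Lpow (a (n + 3))) := by
    simp only [Ymat, Matrix.of_apply, Fin.val_last, eq_self_iff_true, if_true]
    have := entry_r1_odd κ a (i := n+1) hn
    simpa [show n+1+1 = n+2 from rfl, show n+1+2 = n+3 from rfl] using this
  rw [hsub, hentry]
  have hsign : (-1 : LaurentQ) ^ ((Fin.last n : ℕ) + (Fin.last n : ℕ)) = 1 :=
    Even.neg_one_pow ⟨n, by simp⟩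
  rw [hsign, Dpoly_eq]
  ring


lemma succAbove_val {n : ℕ} (p : Fin (n+1)) (j : Fin n) :
    ((p.succAbove j : Fin (n+1)) : ℕ) = if (j : ℕ) < (p : ℕ) then (j : ℕ) else (j : ℕ) + 1 := by
  rw [Fin.succAbove]
  by_cases h : j.castSucc < p
  · rw [if_pos h, if_pos (by exact_mod_cast h), Fin.coe_castSucc]
  · rw [if_neg h, if_neg (by simpa [Fin.lt_def] using h), Fin.val_succ]

-- L-odd : odd s = n+1 ≥ 3 : D_s = K_s D_{s-1} + u_{s+1} · Ym (s-1)
lemma Lodd (m : ℕ) (hn : (m + 2) % 2 = 1) :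
    Dpoly κ a (m + 2) = Kpoly κ a (m + 2) * Dpoly κ a (m + 1)
      + Lpow (a (m + 3)) * (Ymat κ a (m + 1)).det := by
  rw [Dpoly_eq, Matrix.det_succ_row _ (Fin.last (m+1)), Fin.sum_univ_castSucc,
    Fin.sum_univ_castSucc]
  have hz : ∀ j : Fin m,
      (-1 : LaurentQ) ^ ((Fin.last (m+1) : ℕ) + ((j.castSucc.castSucc : Fin (m+2)) : ℕ)) *
        Dmat κ a (m+2) (Fin.last (m+1)) j.castSucc.castSucc *
        ((Dmat κ a (m+2)).submatrix (Fin.last (m+1)).succAbove j.castSucc.castSucc.succAbove).det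
        = 0 := by
    intro j
    have h0 : Dmat κ a (m+2) (Fin.last (m+1)) j.castSucc.castSucc = 0 := by
      have : (j : ℕ) < m := j.isLt
      simp only [Dmat, Matrix.of_apply, Fin.val_last, Fin.coe_castSucc]
      exact entry_zl_odd κ a hn (by omega)
    rw [h0]; ring
  rw [Finset.sum_congr rfl (fun j _ => hz j), Finset.sum_const_zero, zero_add]
  -- term j = castSucc last : col (1-based) m+1
  have hA1 : Dmat κ a (m+2) (Fin.last (m+1)) (Fin.last m).castSucc = -(Lpow (a (m+3))) := by
    simp only [Dmat, Matrix.of_apply, Fin.val_last, Fin.coe_castSucc]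
    have := entry_l1_odd κ a (j := m+1) hn
    simpa using this
  have hA2 : Dmat κ a (m+2) (Fin.last (m+1)) (Fin.last (m+1)) = Kpoly κ a (m+2) := by
    simp only [Dmat, Matrix.of_apply, Fin.val_last]
    exact entry_diag κ a (m+2)
  have hsub1 : (Dmat κ a (m+2)).submatrix (Fin.last (m+1)).succAbove
      ((Fin.last m).castSucc).succAbove = Ymat κ a (m+1) := by
    ext i j : 2
    simp only [Matrix.submatrix_apply, Fin.succAbove_last, Dmat, Ymat, Matrix.of_apply,
      Fin.coe_castSucc, succAbove_val, Fin.val_last]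
    congr 2
    have : (j : ℕ) < m + 1 := j.isLt
    split_ifs <;> omega
  have hsub2 : (Dmat κ a (m+2)).submatrix (Fin.last (m+1)).succAbove
      (Fin.last (m+1)).succAbove = Dmat κ a (m+1) := by
    ext i j : 2
    simp only [Matrix.submatrix_apply, Fin.succAbove_last, Dmat, Matrix.of_apply,
      Fin.coe_castSucc]
  rw [hA1, hA2, hsub1, hsub2]
  have hs1 : (-1 : LaurentQ) ^ ((Fin.last (m+1) : ℕ) + ((Fin.last m).castSucc : ℕ)) = -1 := by
    simp only [Fin.val_last, Fin.coe_castSucc]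
    exact Odd.neg_one_pow ⟨m, by omega⟩
  have hs2 : (-1 : LaurentQ) ^ ((Fin.last (m+1) : ℕ) + (Fin.last (m+1) : ℕ)) = 1 := by
    simp only [Fin.val_last]
    exact Even.neg_one_pow ⟨m+1, by omega⟩
  rw [hs1, hs2, Dpoly_eq]
  ring

-- L-even : even s = n+1 ≥ 4 : D_s = K_s D_{s-1} + u_{s-2} Ym(s-1) + (u_{s-1}-1) Zm(s-1)
lemma Leven (m : ℕ) (hn : (m + 3) % 2 = 0) :
    Dpoly κ a (m + 3) = Kpoly κ a (m + 3) * Dpoly κ a (m + 2)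
      + Lpow (a (m + 1)) * (Ymat κ a (m + 2)).det
      + (Lpow (a (m + 2)) - 1) * (Zmat κ a (m + 2)).det := by
  rw [Dpoly_eq, Matrix.det_succ_row _ (Fin.last (m+2)), Fin.sum_univ_castSucc,
    Fin.sum_univ_castSucc, Fin.sum_univ_castSucc]
  have hz : ∀ j : Fin m,
      (-1 : LaurentQ) ^ ((Fin.last (m+2) : ℕ) + ((j.castSucc.castSucc.castSucc : Fin (m+3)) : ℕ)) *
        Dmat κ a (m+3) (Fin.last (m+2)) j.castSucc.castSucc.castSucc *
        ((Dmat κ a (m+3)).submatrix (Fin.last (m+2)).succAbove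
          j.castSucc.castSucc.castSucc.succAbove).det = 0 := by
    intro j
    have h0 : Dmat κ a (m+3) (Fin.last (m+2)) j.castSucc.castSucc.castSucc = 0 := by
      have : (j : ℕ) < m := j.isLt
      simp only [Dmat, Matrix.of_apply, Fin.val_last, Fin.coe_castSucc]
      exact entry_zl_even κ a hn (by omega)
    rw [h0]; ring
  rw [Finset.sum_congr rfl (fun j _ => hz j), Finset.sum_const_zero, zero_add]
  have hA0 : Dmat κ a (m+3) (Fin.last (m+2)) ((Fin.last m).castSucc.castSucc)
      = Lpow (a (m + 2)) - 1 := by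
    simp only [Dmat, Matrix.of_apply, Fin.val_last, Fin.coe_castSucc]
    have := entry_l2_even κ a (j := m+1) (by omega)
    simpa using this
  have hA1 : Dmat κ a (m+3) (Fin.last (m+2)) ((Fin.last (m+1)).castSucc)
      = -(Lpow (a (m + 1))) := by
    simp only [Dmat, Matrix.of_apply, Fin.val_last, Fin.coe_castSucc]
    have := entry_l1_even κ a (j := m+2) (by omega)
    simpa using this
  have hA2 : Dmat κ a (m+3) (Fin.last (m+2)) (Fin.last (m+2)) = Kpoly κ a (m+3) := by
    simp only [Dmat, Matrix.of_apply, Fin.val_last]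
    exact entry_diag κ a (m+3)
  have hsub0 : (Dmat κ a (m+3)).submatrix (Fin.last (m+2)).succAbove
      ((Fin.last m).castSucc.castSucc).succAbove = Zmat κ a (m+2) := by
    ext i j : 2
    simp only [Matrix.submatrix_apply, Fin.succAbove_last, Dmat, Zmat, Matrix.of_apply,
      Fin.coe_castSucc, succAbove_val, Fin.val_last]
    congr 2
    have : (j : ℕ) < m + 2 := j.isLt
    split_ifs <;> omega
  have hsub1 : (Dmat κ a (m+3)).submatrix (Fin.last (m+2)).succAbove
      ((Fin.last (m+1)).castSucc).succAbove = Ymat κ a (m+2) := by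
    ext i j : 2
    simp only [Matrix.submatrix_apply, Fin.succAbove_last, Dmat, Ymat, Matrix.of_apply,
      Fin.coe_castSucc, succAbove_val, Fin.val_last]
    congr 2
    have : (j : ℕ) < m + 2 := j.isLt
    split_ifs <;> omega
  have hsub2 : (Dmat κ a (m+3)).submatrix (Fin.last (m+2)).succAbove
      (Fin.last (m+2)).succAbove = Dmat κ a (m+2) := by
    ext i j : 2
    simp only [Matrix.submatrix_apply, Fin.succAbove_last, Dmat, Matrix.of_apply,
      Fin.coe_castSucc]
  rw [hA0, hA1, hA2, hsub0, hsub1, hsub2]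
  have hs0 : (-1 : LaurentQ) ^ ((Fin.last (m+2) : ℕ) + (((Fin.last m).castSucc.castSucc) : ℕ)) = 1 := by
    simp only [Fin.val_last, Fin.coe_castSucc]
    exact Even.neg_one_pow ⟨m+1, by omega⟩
  have hs1 : (-1 : LaurentQ) ^ ((Fin.last (m+2) : ℕ) + (((Fin.last (m+1)).castSucc) : ℕ)) = -1 := by
    simp only [Fin.val_last, Fin.coe_castSucc]
    exact Odd.neg_one_pow ⟨m+1, by omega⟩
  have hs2 : (-1 : LaurentQ) ^ ((Fin.last (m+2) : ℕ) + ((Fin.last (m+2)) : ℕ)) = 1 := by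
    simp only [Fin.val_last]
    exact Even.neg_one_pow ⟨m+2, by omega⟩
  rw [hs0, hs1, hs2, Dpoly_eq]
  ring

-- LY-even : even t = n+1 ≥ 4 : Ym t = -u_{t-1} D_{t-1} - (u_t - 1) Xm (t-1)
lemma LYeven (m : ℕ) (hn : (m + 2) % 2 = 0) :
    (Ymat κ a (m + 2)).det = -(Lpow (a (m + 1)) * Dpoly κ a (m + 1))
      - (Lpow (a (m + 2)) - 1) * (Xmat κ a (m + 1)).det := by
  rw [Matrix.det_succ_column _ (Fin.last (m+1)), Fin.sum_univ_castSucc, Fin.sum_univ_castSucc]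
  have hz : ∀ i : Fin m,
      (-1 : LaurentQ) ^ (((i.castSucc.castSucc : Fin (m+2)) : ℕ) + ((Fin.last (m+1)) : ℕ)) *
        Ymat κ a (m+2) i.castSucc.castSucc (Fin.last (m+1)) *
        ((Ymat κ a (m+2)).submatrix i.castSucc.castSucc.succAbove
          (Fin.last (m+1)).succAbove).det = 0 := by
    intro i
    have h0 : Ymat κ a (m+2) i.castSucc.castSucc (Fin.last (m+1)) = 0 := by
      have : (i : ℕ) < m := i.isLt
      simp only [Ymat, Matrix.of_apply, Fin.val_last, Fin.coe_castSucc, eq_self_iff_true, if_true]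
      exact entry_zr κ a (by omega)
    rw [h0]; ring
  rw [Finset.sum_congr rfl (fun i _ => hz i), Finset.sum_const_zero, zero_add]
  have hA1 : Ymat κ a (m+2) ((Fin.last m).castSucc) (Fin.last (m+1))
      = Lpow (a (m + 2)) - 1 := by
    simp only [Ymat, Matrix.of_apply, Fin.val_last, Fin.coe_castSucc, eq_self_iff_true, if_true]
    have := entry_r2_odd κ a (i := m+1) (by omega)
    simpa using this
  have hA2 : Ymat κ a (m+2) (Fin.last (m+1)) (Fin.last (m+1)) = -(Lpow (a (m + 1))) := by
    simp only [Ymat, Matrix.of_apply, Fin.val_last, eq_self_iff_true, if_true]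
    have := entry_r1_even κ a (i := m+2) hn
    simpa using this
  have hsub1 : (Ymat κ a (m+2)).submatrix ((Fin.last m).castSucc).succAbove
      (Fin.last (m+1)).succAbove = Xmat κ a (m+1) := by
    ext i j : 2
    simp only [Matrix.submatrix_apply, Fin.succAbove_last, Ymat, Xmat, Matrix.of_apply,
      Fin.coe_castSucc, succAbove_val, Fin.val_last]
    have hj : (j : ℕ) < m + 1 := j.isLt
    rw [if_neg (by omega : ¬ ((j : ℕ) + 1 = m + 2))]
    congr 2
    have : (i : ℕ) < m + 1 := i.isLt
    split_ifs <;> omega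
  have hsub2 : (Ymat κ a (m+2)).submatrix (Fin.last (m+1)).succAbove
      (Fin.last (m+1)).succAbove = Dmat κ a (m+1) := by
    ext i j : 2
    simp only [Matrix.submatrix_apply, Fin.succAbove_last, Ymat, Dmat, Matrix.of_apply,
      Fin.coe_castSucc]
    rw [if_neg (by omega : ¬ ((j : ℕ) + 1 = m + 2))]
  rw [hA1, hA2, hsub1, hsub2]
  have hs1 : (-1 : LaurentQ) ^ ((((Fin.last m).castSucc) : ℕ) + ((Fin.last (m+1)) : ℕ)) = -1 := by
    simp only [Fin.val_last, Fin.coe_castSucc]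
    exact Odd.neg_one_pow ⟨m, by omega⟩
  have hs2 : (-1 : LaurentQ) ^ (((Fin.last (m+1)) : ℕ) + ((Fin.last (m+1)) : ℕ)) = 1 := by
    simp only [Fin.val_last]
    exact Even.neg_one_pow ⟨m+1, by omega⟩
  rw [hs1, hs2, Dpoly_eq]
  ring

-- LX : odd t = n+1 ≥ 3 : Xm t = -u_{t-1} D_{t-1} - (u_t - 1) Ym (t-1)
lemma LX (m : ℕ) (hn : (m + 2) % 2 = 1) :
    (Xmat κ a (m + 2)).det = -(Lpow (a (m + 1)) * Dpoly κ a (m + 1))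
      - (Lpow (a (m + 2)) - 1) * (Ymat κ a (m + 1)).det := by
  rw [Matrix.det_succ_row _ (Fin.last (m+1)), Fin.sum_univ_castSucc, Fin.sum_univ_castSucc]
  have hz : ∀ j : Fin m,
      (-1 : LaurentQ) ^ (((Fin.last (m+1)) : ℕ) + ((j.castSucc.castSucc : Fin (m+2)) : ℕ)) *
        Xmat κ a (m+2) (Fin.last (m+1)) j.castSucc.castSucc *
        ((Xmat κ a (m+2)).submatrix (Fin.last (m+1)).succAbove
          j.castSucc.castSucc.succAbove).det = 0 := by
    intro j
    have h0 : Xmat κ a (m+2) (Fin.last (m+1)) j.castSucc.castSucc = 0 := by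
      have : (j : ℕ) < m := j.isLt
      simp only [Xmat, Matrix.of_apply, Fin.val_last, Fin.coe_castSucc, eq_self_iff_true, if_true]
      exact entry_zl_even κ a (by omega) (by omega)
    rw [h0]; ring
  rw [Finset.sum_congr rfl (fun j _ => hz j), Finset.sum_const_zero, zero_add]
  have hA1 : Xmat κ a (m+2) (Fin.last (m+1)) ((Fin.last m).castSucc)
      = Lpow (a (m + 2)) - 1 := by
    simp only [Xmat, Matrix.of_apply, Fin.val_last, Fin.coe_castSucc, eq_self_iff_true, if_true]
    have := entry_l2_even κ a (j := m+1) (by omega)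
    simpa using this
  have hA2 : Xmat κ a (m+2) (Fin.last (m+1)) (Fin.last (m+1)) = -(Lpow (a (m + 1))) := by
    simp only [Xmat, Matrix.of_apply, Fin.val_last, eq_self_iff_true, if_true]
    have := entry_l1_even κ a (j := m+2) (by omega)
    simpa using this
  have hsub1 : (Xmat κ a (m+2)).submatrix (Fin.last (m+1)).succAbove
      ((Fin.last m).castSucc).succAbove = Ymat κ a (m+1) := by
    ext i j : 2
    simp only [Matrix.submatrix_apply, Fin.succAbove_last, Xmat, Ymat, Matrix.of_apply,
      Fin.coe_castSucc, succAbove_val, Fin.val_last]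
    have hi : (i : ℕ) < m + 1 := i.isLt
    rw [if_neg (by omega : ¬ ((i : ℕ) + 1 = m + 2))]
    congr 2
    have : (j : ℕ) < m + 1 := j.isLt
    split_ifs <;> omega
  have hsub2 : (Xmat κ a (m+2)).submatrix (Fin.last (m+1)).succAbove
      (Fin.last (m+1)).succAbove = Dmat κ a (m+1) := by
    ext i j : 2
    simp only [Matrix.submatrix_apply, Fin.succAbove_last, Xmat, Dmat, Matrix.of_apply,
      Fin.coe_castSucc]
    rw [if_neg (by omega : ¬ ((i : ℕ) + 1 = m + 2))]
  rw [hA1, hA2, hsub1, hsub2]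
  have hs1 : (-1 : LaurentQ) ^ ((((Fin.last (m+1))) : ℕ) + (((Fin.last m).castSucc) : ℕ)) = -1 := by
    simp only [Fin.val_last, Fin.coe_castSucc]
    exact Odd.neg_one_pow ⟨m, by omega⟩
  have hs2 : (-1 : LaurentQ) ^ (((Fin.last (m+1)) : ℕ) + ((Fin.last (m+1)) : ℕ)) = 1 := by
    simp only [Fin.val_last]
    exact Even.neg_one_pow ⟨m+1, by omega⟩
  rw [hs1, hs2, Dpoly_eq]
  ring

-- LZ : odd t = n+1 ≥ 3 : Zm t = -u_{t+2} Ym (t-1)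
lemma LZ (m : ℕ) (hn : (m + 2) % 2 = 1) :
    (Zmat κ a (m + 2)).det = -(Lpow (a (m + 4)) * (Ymat κ a (m + 1)).det) := by
  rw [Matrix.det_succ_column _ (Fin.last (m+1)), Fin.sum_univ_castSucc]
  have hz : ∀ i : Fin (m+1),
      (-1 : LaurentQ) ^ (((i.castSucc : Fin (m+2)) : ℕ) + ((Fin.last (m+1)) : ℕ)) *
        Zmat κ a (m+2) i.castSucc (Fin.last (m+1)) *
        ((Zmat κ a (m+2)).submatrix i.castSucc.succAbove (Fin.last (m+1)).succAbove).det = 0 := by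
    intro i
    have h0 : Zmat κ a (m+2) i.castSucc (Fin.last (m+1)) = 0 := by
      have hlt : (i : ℕ) < m + 1 := i.isLt
      simp only [Zmat, Matrix.of_apply, Fin.val_last, Fin.coe_castSucc, eq_self_iff_true, if_true]
      by_cases hc : (i : ℕ) + 1 + 3 ≤ m + 3
      · exact entry_zr κ a hc
      · have hieq : (i : ℕ) + 1 = m + 1 := by omega
        rw [hieq]
        have h2 : (m+1) % 2 = 0 := by omega
        have := entry_zr2_even κ a (i := m+1) h2
        simpa using this
    rw [h0]; ring
  rw [Finset.sum_congr rfl (fun i _ => hz i), Finset.sum_const_zero, zero_add]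
  have hA : Zmat κ a (m+2) (Fin.last (m+1)) (Fin.last (m+1)) = -(Lpow (a (m + 4))) := by
    simp only [Zmat, Matrix.of_apply, Fin.val_last, eq_self_iff_true, if_true]
    have := entry_r1_odd κ a (i := m+2) hn
    simpa using this
  have hsub : (Zmat κ a (m+2)).submatrix (Fin.last (m+1)).succAbove
      (Fin.last (m+1)).succAbove = Ymat κ a (m+1) := by
    ext i j : 2
    simp only [Matrix.submatrix_apply, Fin.succAbove_last, Zmat, Ymat, Matrix.of_apply,
      Fin.coe_castSucc]
    have hj : (j : ℕ) < m + 1 := j.isLt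
    rw [if_neg (by omega : ¬ ((j : ℕ) + 1 = m + 2))]
    congr 2
    split_ifs <;> omega
  rw [hA, hsub]
  have hs : (-1 : LaurentQ) ^ (((Fin.last (m+1)) : ℕ) + ((Fin.last (m+1)) : ℕ)) = 1 := by
    simp only [Fin.val_last]
    exact Even.neg_one_pow ⟨m+1, by omega⟩
  rw [hs]
  ring



-- base determinant computations
lemma Dpoly_zero : Dpoly κ a 0 = 1 := by
  rw [Dpoly]
  exact Matrix.det_fin_zero

lemma Dpoly_one : Dpoly κ a 1 = Kpoly κ a 1 := by
  rw [Dpoly, Matrix.det_fin_one]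
  exact entry_diag κ a 1

lemma Dpoly_two : Dpoly κ a 2 = Kpoly κ a 1 * Kpoly κ a 2 - Lpow (a 0) * Lpow (a 3) := by
  rw [Dpoly, Matrix.det_fin_two]
  simp only [Matrix.of_apply, Fin.val_zero, Fin.val_one]
  have h00 : entry κ a (0+1) (0+1) = Kpoly κ a 1 := entry_diag κ a 1
  have h01 : entry κ a (0+1) (1+1) = -(Lpow (a 3)) := by
    have := entry_r1_odd κ a (i := 1) (by omega)
    simpa using this
  have h10 : entry κ a (1+1) (0+1) = -(Lpow (a 0)) := by
    have := entry_l1_even κ a (j := 1) (by omega)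
    simpa using this
  have h11 : entry κ a (1+1) (1+1) = Kpoly κ a 2 := entry_diag κ a 2
  rw [h00, h01, h10, h11]
  ring

lemma Ymat_two : (Ymat κ a 2).det
    = -(Lpow (a 1) * Kpoly κ a 1) + (Lpow (a 2) - 1) * Lpow (a 0) := by
  rw [Matrix.det_fin_two]
  simp only [Ymat, Matrix.of_apply, Fin.val_zero, Fin.val_one]
  norm_num
  have h00 : entry κ a 1 1 = Kpoly κ a 1 := entry_diag κ a 1
  have h01 : entry κ a 1 3 = Lpow (a 2) - 1 := by
    have := entry_r2_odd κ a (i := 1) (by omega)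
    simpa using this
  have h10 : entry κ a 2 1 = -(Lpow (a 0)) := by
    have := entry_l1_even κ a (j := 1) (by omega)
    simpa using this
  have h11 : entry κ a 2 3 = -(Lpow (a 1)) := by
    have := entry_r1_even κ a (i := 2) (by omega)
    simpa using this
  rw [h00, h01, h10, h11]
  ring

lemma Dn_one (h : 1 ≤ κ 1) : Dn κ a 1 = Kpoly κ a 1 := by
  rw [Dn_succ, Dn_zero, En_zero, mul_one, mul_one, ← Kp_succ, Kpoly_eq]
  norm_num
  congr 1
  omega

lemma G_one (hk : 2 ≤ κ 1) (hc : ((κ 1 : ℕ) : ℚ) * a 1 = a 0 + a 2) :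
    G κ a 1 = -(Lpow (a 0)) := by
  have := K3 κ a 0 hk hc
  rw [this, G_zero, Dn_zero]
  ring

/-- the main induction -/
lemma pack (r : ℕ) (hκ : ∀ i, 1 ≤ i → i ≤ r → 2 ≤ κ i)
    (hchain : ∀ i, 1 ≤ i → i ≤ r → ((κ i : ℕ) : ℚ) * a i = a (i - 1) + a (i + 1)) :
    ∀ s, s ≤ r → Dpoly κ a s = Dn κ a s ∧
      (s % 2 = 0 → 1 ≤ s → (Ymat κ a s).det = G κ a s) := by
  intro s
  induction s using Nat.strong_induction_on with
  | _ s ih =>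
  intro hsr
  have hch : ∀ i, 1 ≤ i → i ≤ r → ((κ i : ℕ) : ℚ) * a i = a (i - 1) + a (i + 1) := hchain
  match s with
  | 0 =>
    refine ⟨?_, by omega⟩
    rw [Dpoly_zero, Dn_zero]
  | 1 =>
    refine ⟨?_, by omega⟩
    rw [Dpoly_one, Dn_one κ a (by have := hκ 1 (by omega) (by omega); omega)]
  | 2 =>
    have hk1 : 2 ≤ κ 1 := hκ 1 (by omega) (by omega)
    have hk2 : 2 ≤ κ 2 := hκ 2 (by omega) (by omega)
    have hc1 : ((κ 1 : ℕ) : ℚ) * a 1 = a 0 + a 2 := by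
      have := hchain 1 (by omega) (by omega); simpa using this
    have hc2 : ((κ 2 : ℕ) : ℚ) * a 2 = a 1 + a 3 := by
      have := hchain 2 (by omega) (by omega); simpa using this
    constructor
    · rw [Dpoly_two, K4 κ a 1 hk2 hc2, Dn_one κ a (by omega), G_one κ a hk1 hc1, Kpoly_eq κ a 2]
      ring
    · intro _ _
      rw [Ymat_two, K3 κ a 1 hk2 hc2, G_one κ a hk1 hc1, Dn_one κ a (by omega)]
      ring
  | (m + 3) =>
    have hm2r : m + 2 ≤ r := by omega
    have hm1r : m + 1 ≤ r := by omega
    have ih2 := ih (m + 2) (by omega) hm2r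
    have ih1 := ih (m + 1) (by omega) hm1r
    rcases Nat.even_or_odd (m + 3) with he | ho
    · -- s = m+3 even, so m odd, m ≥ 1
      have hme : (m + 3) % 2 = 0 := Nat.even_iff.mp he
      have hk2 : 2 ≤ κ (m + 2) := hκ (m + 2) (by omega) hm2r
      have hk3 : 2 ≤ κ (m + 3) := hκ (m + 3) (by omega) (by omega)
      have hc2 : ((κ (m + 2) : ℕ) : ℚ) * a (m + 2) = a (m + 1) + a (m + 3) := by
        have := hchain (m + 2) (by omega) hm2r; simpa using this
      have hc3 : ((κ (m + 3) : ℕ) : ℚ) * a (m + 3) = a (m + 2) + a (m + 4) := by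
        have := hchain (m + 3) (by omega) (by omega); simpa using this
      have hYodd : (Ymat κ a (m + 2)).det = -(Lpow (a (m + 4)) * Dpoly κ a (m + 1)) :=
        LYodd κ a (m + 1) (by omega)
      have hZ : (Zmat κ a (m + 2)).det = -(Lpow (a (m + 4)) * (Ymat κ a (m + 1)).det) :=
        LZ κ a m (by omega)
      have hYm1 : (Ymat κ a (m + 1)).det = G κ a (m + 1) := ih1.2 (by omega) (by omega)
      have hG2 : G κ a (m + 2) = -(Lpow (a (m + 1)) * Dn κ a (m + 1))
          - (Lpow (a (m + 2)) - 1) * G κ a (m + 1) := K3 κ a (m + 1) hk2 hc2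
      constructor
      · rw [Leven κ a m hme, hYodd, hZ, hYm1, ih1.1, ih2.1,
          K4 κ a (m + 2) hk3 hc3, Kpoly_eq κ a (m + 3), hG2]
        ring
      · intro h1 h2
        have hG3 : G κ a (m + 3) = -(Lpow (a (m + 2)) * Dn κ a (m + 2))
            - (Lpow (a (m + 3)) - 1) * G κ a (m + 2) := K3 κ a (m + 2) hk3 hc3
        rw [LYeven κ a (m + 1) hme, LX κ a m (by omega), hYm1, ih1.1, ih2.1, hG3, hG2]
        try ring
    · -- s = m+3 odd
      have hmo : (m + 3) % 2 = 1 := Nat.odd_iff.mp ho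
      have hk3 : 2 ≤ κ (m + 3) := hκ (m + 3) (by omega) (by omega)
      have hc3 : ((κ (m + 3) : ℕ) : ℚ) * a (m + 3) = a (m + 2) + a (m + 4) := by
        have := hchain (m + 3) (by omega) (by omega); simpa using this
      have hYm2 : (Ymat κ a (m + 2)).det = G κ a (m + 2) := ih2.2 (by omega) (by omega)
      refine ⟨?_, by omega⟩
      rw [Lodd κ a (m + 1) hmo, hYm2, ih2.1, K4 κ a (m + 2) hk3 hc3, Kpoly_eq κ a (m + 3)]

end D510

/-- Theorem 5.10(i): every coefficient of `D_r` is nonnegative. -/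
theorem coeff_Dpoly_nonneg (r : ℕ) (hr : 1 ≤ r) (a : ℕ → ℚ) (κ : ℕ → ℕ)
    (hκ : ∀ i, 1 ≤ i → i ≤ r → 2 ≤ κ i)
    (hchain : ∀ i, 1 ≤ i → i ≤ r → (κ i : ℚ) * a i = a (i - 1) + a (i + 1)) :
    ∀ q : ℚ, 0 ≤ (Dpoly κ a r).coeff q := by
  intro q
  have h := (D510.pack κ a r hκ hchain r le_rfl).1
  rw [h]
  exact (D510.NN_Dn_En κ a r).1 q
end

section
/- Every coefficient of A_r is nonnegative; that is, for every q ∈ ℚ the coefficient of L^q in A_r is ≥ 0. (Part of the simultaneous induction proving Theorem 5.10(i).) -/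
open Finset

/-- `A_s`: `A_1 = ∑_{j=0}^{κ_1−2} L^{j·a_1}`, and for `s ≥ 2`
`A_s = (∑_{j=0}^{κ_s−3} L^{j·a_s})·D_{s−1} + L^{(κ_s−2)·a_s}·A_{s−1}`
(an empty sum being `0`). -/
noncomputable def Apoly (κ : ℕ → ℕ) (a : ℕ → ℚ) : ℕ → LaurentQ
  | 0 => 0
  | 1 => ∑ j ∈ Finset.range (κ 1 - 1), Lpow ((j : ℚ) * a 1)
  | (s + 2) =>
      (∑ j ∈ Finset.range (κ (s + 2) - 2), Lpow ((j : ℚ) * a (s + 2))) * Dpoly κ a (s + 1)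
        + Lpow (((κ (s + 2) : ℚ) - 2) * a (s + 2)) * Apoly κ a (s + 1)

section Infra
variable {κ : ℕ → ℕ} {a : ℕ → ℚ}

lemma Lpow_add (q q' : ℚ) : Lpow (q + q') = Lpow q * Lpow q' := by
  simp [Lpow, AddMonoidAlgebra.single_mul_single]

lemma Lpow_zero : Lpow 0 = 1 := rfl

/-- nonnegativity of all coefficients -/
def NN (f : LaurentQ) : Prop := ∀ q : ℚ, 0 ≤ f.coeff q

lemma NN_add {f g : LaurentQ} (hf : NN f) (hg : NN g) : NN (f + g) := fun q => by
  simpa using add_nonneg (hf q) (hg q)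

lemma NN_mul {f g : LaurentQ} (hf : NN f) (hg : NN g) : NN (f * g) := fun q => by
  rw [AddMonoidAlgebra.mul_apply]
  refine Finset.sum_nonneg fun x _ => Finset.sum_nonneg fun y _ => ?_
  dsimp only
  split_ifs
  · exact mul_nonneg (hf x) (hg y)
  · exact le_refl _

lemma NN_Lpow (q : ℚ) : NN (Lpow q) := fun x => by
  simp only [Lpow, AddMonoidAlgebra.coeff_single_apply]
  split_ifs <;> norm_num

lemma NN_one : NN (1 : LaurentQ) := NN_Lpow 0

lemma NN_sum {s : Finset ℕ} {f : ℕ → LaurentQ} (h : ∀ i ∈ s, NN (f i)) :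
    NN (∑ i ∈ s, f i) := fun q => by
  rw [AddMonoidAlgebra.coeff_sum, Finset.sum_apply']
  exact Finset.sum_nonneg fun i hi => h i hi q

/-- the entry (i,j) vanishes away from the band -/
lemma entry_eq_zero {i j : ℕ}
    (h : j + 2 < i ∨ i + 2 < j ∨ (Odd i ∧ j + 1 < i) ∨ (Even i ∧ i + 1 < j)) :
    entry κ a i j = 0 := by
  rw [Nat.odd_iff, Nat.even_iff] at h
  unfold entry
  split_ifs with h1 h2 h3 h4 h5 h6 h7 h8 <;>
    first
      | rfl
      | (exfalso;
         (try simp only [Nat.odd_iff, Nat.not_odd_iff_even, Nat.even_iff] at *); omega)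

end Infra
section Dets
variable {κ : ℕ → ℕ} {a : ℕ → ℚ}

lemma entry_diag (m : ℕ) : entry κ a (m+1) (m+1) = Kpoly κ a (m+1) := by
  unfold entry; rw [if_pos rfl]

lemma entry_V2 {m : ℕ} (h : Odd (m+1)) : entry κ a (m+1) m = -(Lpow (a (m+2))) := by
  unfold entry; rw [if_neg (by omega), if_pos h, if_pos rfl]

lemma entry_V3 {m : ℕ} (h : Odd (m+1)) : entry κ a (m+1) (m+2) = -(Lpow (a (m+3))) := by
  unfold entry; rw [if_neg (by omega), if_pos h, if_neg (by omega), if_pos rfl]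

lemma entry_V4 {m : ℕ} (h : Odd (m+1)) : entry κ a (m+1) (m+3) = Lpow (a (m+2)) - 1 := by
  unfold entry
  rw [if_neg (by omega), if_pos h, if_neg (by omega), if_neg (by omega), if_pos rfl]

lemma entry_V5 {m : ℕ} (h : Even (m+2)) : entry κ a (m+2) m = Lpow (a (m+1)) - 1 := by
  unfold entry
  rw [if_neg (by omega), if_neg (Nat.not_odd_iff_even.mpr h), if_pos rfl]
  norm_num

lemma entry_V6 {m : ℕ} (h : Even (m+2)) : entry κ a (m+2) (m+1) = -(Lpow (a m)) := by
  unfold entry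
  rw [if_neg (by omega), if_neg (Nat.not_odd_iff_even.mpr h),
    if_neg (by omega), if_pos rfl]
  norm_num

lemma entry_V7 {m : ℕ} (h : Even (m+1)) : entry κ a (m+1) (m+2) = -(Lpow (a m)) := by
  unfold entry
  rw [if_neg (by omega), if_neg (Nat.not_odd_iff_even.mpr h),
    if_neg (by omega), if_neg (by omega), if_pos rfl]
  norm_num

/-- auxiliary minors: for `m` even, rows `1..m`, columns `1..m-1, m+1`;
for `m` odd, rows `1..m-1, m+1`, columns `1..m`. -/
noncomputable def Ymat (κ : ℕ → ℕ) (a : ℕ → ℚ) (m : ℕ) : Matrix (Fin m) (Fin m) LaurentQ :=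
  Matrix.of fun i j =>
    entry κ a (if Odd m ∧ (i : ℕ) = m - 1 then m + 1 else (i : ℕ) + 1)
              (if Even m ∧ (j : ℕ) = m - 1 then m + 1 else (j : ℕ) + 1)

noncomputable def Ypoly (κ : ℕ → ℕ) (a : ℕ → ℚ) (m : ℕ) : LaurentQ := (Ymat κ a m).det

lemma succAbove_val {n : ℕ} (p : Fin (n+1)) (i : Fin n) :
    ((p.succAbove i : Fin (n+1)) : ℕ) = if (i : ℕ) < (p : ℕ) then (i : ℕ) else (i : ℕ) + 1 := by
  rw [Fin.succAbove]
  split_ifs with h1 h2 h3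
  · rfl
  · exact absurd (by exact_mod_cast h1) h2
  · exact absurd (by exact_mod_cast h3) h1
  · rfl

lemma Ypoly_one : Ypoly κ a 1 = -(Lpow (a 0)) := by
  rw [Ypoly, Matrix.det_fin_one, Ymat]
  have : (Matrix.of fun (i j : Fin 1) =>
      entry κ a (if Odd 1 ∧ (i : ℕ) = 1 - 1 then 1 + 1 else (i : ℕ) + 1)
        (if Even 1 ∧ (j : ℕ) = 1 - 1 then 1 + 1 else (j : ℕ) + 1)) 0 0
      = entry κ a 2 1 := by norm_num
  rw [this]
  exact entry_V6 (m := 0) (by norm_num)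

end Dets
section Rec
variable {κ : ℕ → ℕ} {a : ℕ → ℚ}

lemma sign_odd (n : ℕ) : ((-1 : LaurentQ)) ^ (n + (n+1)) = -1 := by
  rw [show n + (n+1) = 2*n+1 by omega, pow_succ, pow_mul]; norm_num

lemma sign_odd' (n : ℕ) : ((-1 : LaurentQ)) ^ ((n+1) + n) = -1 := by
  rw [show (n+1) + n = 2*n+1 by omega, pow_succ, pow_mul]; norm_num

lemma sign_even (n : ℕ) : ((-1 : LaurentQ)) ^ ((n+1) + (n+1)) = 1 := by
  rw [show (n+1) + (n+1) = 2*(n+1) by omega, pow_mul]; norm_num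

lemma Dmat_eq (s : ℕ) :
    Dpoly κ a s = (Matrix.of fun i j : Fin s => entry κ a ((i : ℕ) + 1) ((j : ℕ) + 1)).det := rfl

lemma Ypoly_rec (n : ℕ) :
    Ypoly κ a (n+2)
      = -(Lpow (a (n+1)) * Dpoly κ a (n+1)) - (Lpow (a (n+2)) - 1) * Ypoly κ a (n+1) := by
  rcases Nat.even_or_odd (n+2) with hpar | hpar
  · -- even: expand along last column
    have hno : ¬ Odd (n+2) := Nat.not_odd_iff_even.mpr hpar
    rw [Ypoly, Matrix.det_succ_column (Ymat κ a (n+2)) (Fin.last (n+1)),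
      Fin.sum_univ_castSucc, Fin.sum_univ_castSucc]
    have h0 : ∀ i : Fin n,
        (-1 : LaurentQ) ^ ((((i.castSucc).castSucc : Fin (n+2)) : ℕ) + ((Fin.last (n+1) : Fin (n+2)) : ℕ))
          * Ymat κ a (n+2) (i.castSucc.castSucc) (Fin.last (n+1))
          * ((Ymat κ a (n+2)).submatrix (i.castSucc.castSucc).succAbove (Fin.last (n+1)).succAbove).det = 0 := by
      intro i
      have hz : Ymat κ a (n+2) (i.castSucc.castSucc) (Fin.last (n+1)) = 0 := by
        simp only [Ymat, Matrix.of_apply, Fin.coe_castSucc, Fin.val_last]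
        rw [if_neg (by simp [hno]), if_pos ⟨hpar, rfl⟩]
        exact entry_eq_zero (by right; left; have := i.isLt; omega)
      rw [hz]; ring
    rw [Finset.sum_congr rfl (fun i _ => h0 i), Finset.sum_const_zero]
    -- the two surviving terms
    have e1 : Ymat κ a (n+2) ((Fin.last n).castSucc) (Fin.last (n+1)) = Lpow (a (n+2)) - 1 := by
      simp only [Ymat, Matrix.of_apply, Fin.coe_castSucc, Fin.val_last]
      rw [if_neg (by simp [hno]), if_pos ⟨hpar, rfl⟩]
      exact entry_V4 (m := n) (by have := hpar; simp only [Nat.odd_iff, Nat.even_iff] at this ⊢; omega)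
    have e2 : Ymat κ a (n+2) (Fin.last (n+1)) (Fin.last (n+1)) = -(Lpow (a (n+1))) := by
      simp only [Ymat, Matrix.of_apply, Fin.val_last]
      rw [if_neg (by simp [hno]), if_pos ⟨hpar, rfl⟩]
      exact entry_V7 (m := n+1) hpar
    have m1 : ((Ymat κ a (n+2)).submatrix ((Fin.last n).castSucc).succAbove
        (Fin.last (n+1)).succAbove) = Ymat κ a (n+1) := by
      ext i j : 1
      simp only [Matrix.submatrix_apply, Ymat, Matrix.of_apply]
      have hi := succAbove_val ((Fin.last n).castSucc) i
      have hj := succAbove_val (Fin.last (n+1)) j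
      simp only [Fin.coe_castSucc, Fin.val_last] at hi hj
      rw [hi, hj]
      have hij : (i : ℕ) < n + 1 := i.isLt
      have hjj : (j : ℕ) < n + 1 := j.isLt
      split_ifs <;>
        (try rfl) <;>
        (simp only [Nat.odd_iff, Nat.even_iff, not_and, not_lt] at *) <;>
        first
          | omega
          | (congr 1 <;> first | omega | (congr 1 <;> omega))
    have m2 : ((Ymat κ a (n+2)).submatrix (Fin.last (n+1)).succAbove
        (Fin.last (n+1)).succAbove) = Matrix.of fun i j : Fin (n+1) =>
          entry κ a ((i : ℕ) + 1) ((j : ℕ) + 1) := by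
      ext i j : 1
      simp only [Matrix.submatrix_apply, Ymat, Matrix.of_apply]
      have hi := succAbove_val (Fin.last (n+1)) i
      have hj := succAbove_val (Fin.last (n+1)) j
      simp only [Fin.val_last] at hi hj
      rw [hi, hj]
      have hij : (i : ℕ) < n + 1 := i.isLt
      have hjj : (j : ℕ) < n + 1 := j.isLt
      split_ifs <;>
        (try rfl) <;>
        (simp only [Nat.odd_iff, Nat.even_iff, not_and, not_lt] at *) <;>
        first
          | omega
          | (congr 1 <;> first | omega | (congr 1 <;> omega))
    rw [e1, e2, m1, m2, ← Dmat_eq]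
    simp only [Fin.coe_castSucc, Fin.val_last, sign_odd, sign_odd', sign_even]
    rw [← Ypoly]
    ring
  · -- odd: expand along last row
    have hne : ¬ Even (n+2) := Nat.not_even_iff_odd.mpr hpar
    rw [Ypoly, Matrix.det_succ_row (Ymat κ a (n+2)) (Fin.last (n+1)),
      Fin.sum_univ_castSucc, Fin.sum_univ_castSucc]
    have h0 : ∀ j : Fin n,
        (-1 : LaurentQ) ^ (((Fin.last (n+1) : Fin (n+2)) : ℕ) + (((j.castSucc).castSucc : Fin (n+2)) : ℕ))
          * Ymat κ a (n+2) (Fin.last (n+1)) (j.castSucc.castSucc)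
          * ((Ymat κ a (n+2)).submatrix (Fin.last (n+1)).succAbove (j.castSucc.castSucc).succAbove).det = 0 := by
      intro j
      have hz : Ymat κ a (n+2) (Fin.last (n+1)) (j.castSucc.castSucc) = 0 := by
        simp only [Ymat, Matrix.of_apply, Fin.coe_castSucc, Fin.val_last]
        rw [if_pos ⟨hpar, rfl⟩, if_neg (by simp [hne])]
        exact entry_eq_zero (by left; have := j.isLt; omega)
      rw [hz]; ring
    rw [Finset.sum_congr rfl (fun j _ => h0 j), Finset.sum_const_zero]
    have e1 : Ymat κ a (n+2) (Fin.last (n+1)) ((Fin.last n).castSucc) = Lpow (a (n+2)) - 1 := by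
      simp only [Ymat, Matrix.of_apply, Fin.coe_castSucc, Fin.val_last]
      rw [if_pos ⟨hpar, rfl⟩, if_neg (by simp [hne])]
      exact entry_V5 (m := n+1) (by have := hpar; simp only [Nat.odd_iff, Nat.even_iff] at this ⊢; omega)
    have e2 : Ymat κ a (n+2) (Fin.last (n+1)) (Fin.last (n+1)) = -(Lpow (a (n+1))) := by
      simp only [Ymat, Matrix.of_apply, Fin.val_last]
      rw [if_pos ⟨hpar, rfl⟩, if_neg (by simp [hne])]
      exact entry_V6 (m := n+1) (by have := hpar; simp only [Nat.odd_iff, Nat.even_iff] at this ⊢; omega)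
    have m1 : ((Ymat κ a (n+2)).submatrix (Fin.last (n+1)).succAbove
        ((Fin.last n).castSucc).succAbove) = Ymat κ a (n+1) := by
      ext i j : 1
      simp only [Matrix.submatrix_apply, Ymat, Matrix.of_apply]
      have hi := succAbove_val (Fin.last (n+1)) i
      have hj := succAbove_val ((Fin.last n).castSucc) j
      simp only [Fin.coe_castSucc, Fin.val_last] at hi hj
      rw [hi, hj]
      have hij : (i : ℕ) < n + 1 := i.isLt
      have hjj : (j : ℕ) < n + 1 := j.isLt
      split_ifs <;>
        (try rfl) <;>
        (simp only [Nat.odd_iff, Nat.even_iff, not_and, not_lt] at *) <;>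
        first
          | omega
          | (congr 1 <;> first | omega | (congr 1 <;> omega))
    have m2 : ((Ymat κ a (n+2)).submatrix (Fin.last (n+1)).succAbove
        (Fin.last (n+1)).succAbove) = Matrix.of fun i j : Fin (n+1) =>
          entry κ a ((i : ℕ) + 1) ((j : ℕ) + 1) := by
      ext i j : 1
      simp only [Matrix.submatrix_apply, Ymat, Matrix.of_apply]
      have hi := succAbove_val (Fin.last (n+1)) i
      have hj := succAbove_val (Fin.last (n+1)) j
      simp only [Fin.val_last] at hi hj
      rw [hi, hj]
      have hij : (i : ℕ) < n + 1 := i.isLt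
      have hjj : (j : ℕ) < n + 1 := j.isLt
      split_ifs <;>
        (try rfl) <;>
        (simp only [Nat.odd_iff, Nat.even_iff, not_and, not_lt] at *) <;>
        first
          | omega
          | (congr 1 <;> first | omega | (congr 1 <;> omega))
    rw [e1, e2, m1, m2, ← Dmat_eq]
    simp only [Fin.coe_castSucc, Fin.val_last, sign_odd, sign_odd', sign_even]
    rw [← Ypoly]
    ring
end Rec
section Rec2
variable {κ : ℕ → ℕ} {a : ℕ → ℚ}

lemma Dpoly_rec (n : ℕ) :
    Dpoly κ a (n+2)
      = Kpoly κ a (n+2) * Dpoly κ a (n+1) + Lpow (a (n+3)) * Ypoly κ a (n+1) := by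
  rcases Nat.even_or_odd (n+2) with hpar | hpar
  · -- even: expand along last column
    rw [Dmat_eq, Matrix.det_succ_column _ (Fin.last (n+1)),
      Fin.sum_univ_castSucc, Fin.sum_univ_castSucc]
    have h0 : ∀ i : Fin n,
        (-1 : LaurentQ) ^ ((((i.castSucc).castSucc : Fin (n+2)) : ℕ) + ((Fin.last (n+1) : Fin (n+2)) : ℕ))
          * (Matrix.of fun i j : Fin (n+2) => entry κ a ((i : ℕ) + 1) ((j : ℕ) + 1)) (i.castSucc.castSucc) (Fin.last (n+1))
          * (((Matrix.of fun i j : Fin (n+2) => entry κ a ((i : ℕ) + 1) ((j : ℕ) + 1))).submatrix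
              (i.castSucc.castSucc).succAbove (Fin.last (n+1)).succAbove).det = 0 := by
      intro i
      have hz : entry κ a ((i : ℕ) + 1) ((n+1) + 1) = 0 := by
        have hb := i.isLt
        rcases Nat.even_or_odd ((i : ℕ)+1) with h | h
        · exact entry_eq_zero (by right; right; right; exact ⟨h, by omega⟩)
        · apply entry_eq_zero
          right; left
          rw [Nat.odd_iff] at h
          rw [Nat.even_iff] at hpar
          omega
      simp only [Matrix.of_apply, Fin.coe_castSucc, Fin.val_last, hz]
      ring
    rw [Finset.sum_congr rfl (fun i _ => h0 i), Finset.sum_const_zero]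
    have e1 : entry κ a ((n : ℕ) + 1) ((n+1) + 1) = -(Lpow (a (n+3))) :=
      entry_V3 (m := n) (by have := hpar; simp only [Nat.odd_iff, Nat.even_iff] at this ⊢; omega)
    have e2 : entry κ a ((n+1) + 1) ((n+1) + 1) = Kpoly κ a (n+2) := entry_diag (m := n+1)
    have m1 : (((Matrix.of fun i j : Fin (n+2) => entry κ a ((i : ℕ) + 1) ((j : ℕ) + 1))).submatrix
        ((Fin.last n).castSucc).succAbove (Fin.last (n+1)).succAbove) = Ymat κ a (n+1) := by
      ext i j : 1
      simp only [Matrix.submatrix_apply, Ymat, Matrix.of_apply]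
      have hi := succAbove_val ((Fin.last n).castSucc) i
      have hj := succAbove_val (Fin.last (n+1)) j
      simp only [Fin.coe_castSucc, Fin.val_last] at hi hj
      rw [hi, hj]
      have hij : (i : ℕ) < n + 1 := i.isLt
      have hjj : (j : ℕ) < n + 1 := j.isLt
      split_ifs <;>
        (try rfl) <;>
        (simp only [Nat.odd_iff, Nat.even_iff, not_and, not_lt] at *) <;>
        first
          | omega
          | (congr 1 <;> first | omega | (congr 1 <;> omega))
    have m2 : (((Matrix.of fun i j : Fin (n+2) => entry κ a ((i : ℕ) + 1) ((j : ℕ) + 1))).submatrix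
        (Fin.last (n+1)).succAbove (Fin.last (n+1)).succAbove) = Matrix.of fun i j : Fin (n+1) =>
          entry κ a ((i : ℕ) + 1) ((j : ℕ) + 1) := by
      ext i j : 1
      simp only [Matrix.submatrix_apply, Matrix.of_apply]
      have hi := succAbove_val (Fin.last (n+1)) i
      have hj := succAbove_val (Fin.last (n+1)) j
      simp only [Fin.val_last] at hi hj
      rw [hi, hj]
      have hij : (i : ℕ) < n + 1 := i.isLt
      have hjj : (j : ℕ) < n + 1 := j.isLt
      rw [if_pos hij, if_pos hjj]
    simp only [Matrix.of_apply, Fin.coe_castSucc, Fin.val_last]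
    rw [e1, e2, m1, m2, ← Dmat_eq, ← Ypoly]
    simp only [sign_odd, sign_odd', sign_even]
    ring
  · -- odd: expand along last row
    rw [Dmat_eq, Matrix.det_succ_row _ (Fin.last (n+1)),
      Fin.sum_univ_castSucc, Fin.sum_univ_castSucc]
    have h0 : ∀ j : Fin n,
        (-1 : LaurentQ) ^ (((Fin.last (n+1) : Fin (n+2)) : ℕ) + (((j.castSucc).castSucc : Fin (n+2)) : ℕ))
          * (Matrix.of fun i j : Fin (n+2) => entry κ a ((i : ℕ) + 1) ((j : ℕ) + 1)) (Fin.last (n+1)) (j.castSucc.castSucc)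
          * (((Matrix.of fun i j : Fin (n+2) => entry κ a ((i : ℕ) + 1) ((j : ℕ) + 1))).submatrix
              (Fin.last (n+1)).succAbove (j.castSucc.castSucc).succAbove).det = 0 := by
      intro j
      have hz : entry κ a ((n+1) + 1) ((j : ℕ) + 1) = 0 := by
        have hb := j.isLt
        exact entry_eq_zero (by right; right; left; exact ⟨hpar, by omega⟩)
      simp only [Matrix.of_apply, Fin.coe_castSucc, Fin.val_last, hz]
      ring
    rw [Finset.sum_congr rfl (fun j _ => h0 j), Finset.sum_const_zero]
    have e1 : entry κ a ((n+1) + 1) ((n : ℕ) + 1) = -(Lpow (a (n+3))) :=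
      entry_V2 (m := n+1) hpar
    have e2 : entry κ a ((n+1) + 1) ((n+1) + 1) = Kpoly κ a (n+2) := entry_diag (m := n+1)
    have m1 : (((Matrix.of fun i j : Fin (n+2) => entry κ a ((i : ℕ) + 1) ((j : ℕ) + 1))).submatrix
        (Fin.last (n+1)).succAbove ((Fin.last n).castSucc).succAbove) = Ymat κ a (n+1) := by
      ext i j : 1
      simp only [Matrix.submatrix_apply, Ymat, Matrix.of_apply]
      have hi := succAbove_val (Fin.last (n+1)) i
      have hj := succAbove_val ((Fin.last n).castSucc) j
      simp only [Fin.coe_castSucc, Fin.val_last] at hi hj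
      rw [hi, hj]
      have hij : (i : ℕ) < n + 1 := i.isLt
      have hjj : (j : ℕ) < n + 1 := j.isLt
      split_ifs <;>
        (try rfl) <;>
        (simp only [Nat.odd_iff, Nat.even_iff, not_and, not_lt] at *) <;>
        first
          | omega
          | (congr 1 <;> first | omega | (congr 1 <;> omega))
    have m2 : (((Matrix.of fun i j : Fin (n+2) => entry κ a ((i : ℕ) + 1) ((j : ℕ) + 1))).submatrix
        (Fin.last (n+1)).succAbove (Fin.last (n+1)).succAbove) = Matrix.of fun i j : Fin (n+1) =>
          entry κ a ((i : ℕ) + 1) ((j : ℕ) + 1) := by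
      ext i j : 1
      simp only [Matrix.submatrix_apply, Matrix.of_apply]
      have hi := succAbove_val (Fin.last (n+1)) i
      have hj := succAbove_val (Fin.last (n+1)) j
      simp only [Fin.val_last] at hi hj
      rw [hi, hj]
      have hij : (i : ℕ) < n + 1 := i.isLt
      have hjj : (j : ℕ) < n + 1 := j.isLt
      rw [if_pos hij, if_pos hjj]
    simp only [Matrix.of_apply, Fin.coe_castSucc, Fin.val_last]
    rw [e1, e2, m1, m2, ← Dmat_eq, ← Ypoly]
    simp only [sign_odd, sign_odd', sign_even]
    ring

lemma Dpoly_zero : Dpoly κ a 0 = 1 := by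
  rw [Dmat_eq]
  exact Matrix.det_fin_zero

lemma Dpoly_one : Dpoly κ a 1 = Kpoly κ a 1 := by
  rw [Dmat_eq, Matrix.det_fin_one]
  exact entry_diag (m := 0)

end Rec2
section Alg
variable {κ : ℕ → ℕ} {a : ℕ → ℚ}

/-- geometric sum -/
noncomputable def Geo (x : ℚ) (n : ℕ) : LaurentQ := ∑ j ∈ Finset.range n, Lpow ((j : ℚ) * x)

lemma Geo_succ (x : ℚ) (n : ℕ) : Geo x (n+1) = Geo x n + Lpow ((n : ℚ) * x) := by
  rw [Geo, Finset.sum_range_succ]; rfl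

lemma Geo_shift (x : ℚ) (n : ℕ) : Geo x (n+1) = 1 + Lpow x * Geo x n := by
  rw [Geo, Finset.sum_range_succ', Geo, Finset.mul_sum]
  have h1 : ∀ j : ℕ, Lpow (((j:ℕ)+1 : ℚ) * x) = Lpow x * Lpow ((j : ℚ) * x) := by
    intro j; rw [← Lpow_add]; congr 1; ring
  have h2 : Lpow ((0 : ℚ) * x) = 1 := by norm_num [Lpow_zero]
  push_cast
  rw [Finset.sum_congr rfl (fun j _ => h1 j), h2]
  ring

lemma Geo_telescope (x : ℚ) (n : ℕ) :
    (Lpow x - 1) * Geo x n = Lpow ((n : ℚ) * x) - 1 := by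
  induction n with
  | zero => simp [Geo, Lpow_zero]
  | succ n ih =>
    rw [Geo_succ, mul_add, ih]
    have : Lpow x * Lpow ((n : ℚ) * x) = Lpow (((n:ℕ)+1 : ℚ) * x) := by
      rw [← Lpow_add]; congr 1; ring
    push_cast at this ⊢
    linear_combination this

lemma Kpoly_eq_Geo (i : ℕ) : Kpoly κ a i = Geo (a i) (κ i) := rfl

lemma grand (a : ℕ → ℚ) (κ : ℕ → ℕ) (r : ℕ)
    (hκ : ∀ i, 1 ≤ i → i ≤ r → 2 ≤ κ i)
    (hchain : ∀ i, 1 ≤ i → i ≤ r → (κ i : ℚ) * a i = a (i - 1) + a (i + 1)) :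
    ∀ m : ℕ, m + 1 ≤ r →
      (Dpoly κ a (m+1) = Dpoly κ a m + Lpow (a (m+1)) * Apoly κ a (m+1)) ∧
      (Lpow (a (m+1) - a (m+2)) * (Dpoly κ a (m+1) - Apoly κ a (m+1))
          = Dpoly κ a m - 1 + Lpow (a 0)) ∧
      (Ypoly κ a (m+1) = -(Dpoly κ a m - 1 + Lpow (a 0))) := by
  intro m
  induction m with
  | zero =>
    intro hle
    simp only [Nat.zero_add] at *
    obtain ⟨k, hk⟩ : ∃ k, κ 1 = k + 2 := ⟨κ 1 - 2, by have := hκ 1 le_rfl hle; omega⟩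
    have hc : ((k:ℚ)+2) * a 1 = a 0 + a 2 := by
      have h := hchain 1 le_rfl hle
      rw [hk] at h; push_cast at h
      exact h
    have hA1 : Apoly κ a 1 = Geo (a 1) (k+1) := by
      show (∑ j ∈ Finset.range (κ 1 - 1), Lpow ((j : ℚ) * a 1)) = _
      rw [hk, show k+2-1 = k+1 from rfl]; rfl
    have hD1 : Dpoly κ a 1 = Geo (a 1) (k+2) := by
      rw [Dpoly_one, Kpoly_eq_Geo, hk]
    refine ⟨?_, ?_, ?_⟩
    · rw [hD1, Dpoly_zero, hA1, Geo_shift]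
    · have e : Lpow (a 1 - a 2) * Lpow (((k+1 : ℕ) : ℚ) * a 1) = Lpow (a 0) := by
        rw [← Lpow_add]; congr 1; push_cast; linarith
      rw [hD1, hA1, Dpoly_zero, Geo_succ]
      linear_combination e
    · rw [Ypoly_one, Dpoly_zero]; ring
  | succ m ih =>
    intro hle
    obtain ⟨ih1, ih2, ih3⟩ := ih (by omega)
    simp only [show m+1+1 = m+2 from rfl, show m+1+2 = m+3 from rfl]
    obtain ⟨k, hk⟩ : ∃ k, κ (m+2) = k + 2 :=
      ⟨κ (m+2) - 2, by have := hκ (m+2) (by omega) (by omega); omega⟩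
    have hc : ((k:ℚ)+2) * a (m+2) = a (m+1) + a (m+3) := by
      have h := hchain (m+2) (by omega) (by omega)
      rw [hk] at h; push_cast at h
      rw [show m+2+1 = m+3 from rfl] at h
      exact h
    have hA2 : Apoly κ a (m+2) = Geo (a (m+2)) k * Dpoly κ a (m+1)
        + Lpow ((k : ℚ) * a (m+2)) * Apoly κ a (m+1) := by
      have h0 : Apoly κ a (m+2)
          = (∑ j ∈ Finset.range (κ (m+2) - 2), Lpow ((j : ℚ) * a (m+2))) * Dpoly κ a (m+1)
            + Lpow (((κ (m+2) : ℚ) - 2) * a (m+2)) * Apoly κ a (m+1) := rfl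
      rw [h0, hk, show k+2-2 = k from rfl,
        show (((k+2 : ℕ) : ℚ) - 2) = (k : ℚ) from by push_cast; ring]
      rfl
    have f1 := Dpoly_rec (κ := κ) (a := a) m
    have f5 : Lpow (a (m+2)) * Lpow ((k : ℚ) * a (m+2)) = Lpow (((k+1 : ℕ) : ℚ) * a (m+2)) := by
      rw [← Lpow_add]; congr 1; push_cast; ring
    have f3 : Kpoly κ a (m+2)
        = 1 + Lpow (a (m+2)) * Geo (a (m+2)) k + Lpow (((k+1 : ℕ) : ℚ) * a (m+2)) := by
      rw [Kpoly_eq_Geo, hk, show k+2 = (k+1)+1 from rfl, Geo_shift, Geo_succ]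
      linear_combination Lpow (a (m+2)) * 0 + f5
    have f7 : (Lpow (a (m+2)) - 1) * Geo (a (m+2)) k = Lpow ((k : ℚ) * a (m+2)) - 1 :=
      Geo_telescope _ _
    have g1 : Lpow (a (m+2) - a (m+3)) * Lpow ((k : ℚ) * a (m+2))
        = Lpow (a (m+1) - a (m+2)) := by
      rw [← Lpow_add]; congr 1; linarith
    have g2 : Lpow (a (m+1) - a (m+2)) * Lpow (a (m+2)) = Lpow (a (m+1)) := by
      rw [← Lpow_add]; congr 1; ring
    have g5 : Lpow (a (m+2) - a (m+3)) * Lpow (((k+1 : ℕ) : ℚ) * a (m+2))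
        = Lpow (a (m+1)) := by
      rw [← Lpow_add]; congr 1; push_cast; linarith
    have q1 : Lpow (((k+1 : ℕ) : ℚ) * a (m+2))
        = Lpow (a (m+3)) * Lpow (a (m+1) - a (m+2)) := by
      rw [← Lpow_add]; congr 1; push_cast; linarith
    have f6 : Lpow (((k+1 : ℕ) : ℚ) * a (m+2)) * (Dpoly κ a (m+1) - Apoly κ a (m+1))
        = Lpow (a (m+3)) * (Dpoly κ a m - 1 + Lpow (a 0)) := by
      rw [q1]; linear_combination Lpow (a (m+3)) * ih2
    have p1 : Dpoly κ a (m+2) = Dpoly κ a (m+1) + Lpow (a (m+2)) * Apoly κ a (m+2) := by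
      linear_combination f1 + Dpoly κ a (m+1) * f3 + Lpow (a (m+3)) * ih3 + f6
        - Apoly κ a (m+1) * f5 - Lpow (a (m+2)) * hA2
    refine ⟨p1, ?_, ?_⟩
    · linear_combination Lpow (a (m+2) - a (m+3)) * p1
        + (Lpow (a (m+2) - a (m+3)) * Lpow (a (m+2)) - Lpow (a (m+2) - a (m+3))) * hA2
        + (Lpow (a (m+2) - a (m+3)) * Dpoly κ a (m+1)) * f7
        + (Lpow (a (m+2) - a (m+3)) * Apoly κ a (m+1)) * f5
        + (Dpoly κ a (m+1) - Apoly κ a (m+1)) * g1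
        + Apoly κ a (m+1) * g5 + ih2 - ih1
    · have y1 := Ypoly_rec (κ := κ) (a := a) m
      linear_combination y1 - (Lpow (a (m+2)) - 1) * ih3 - Lpow (a (m+2)) * ih2
        + (Dpoly κ a (m+1) - Apoly κ a (m+1)) * g2 + ih1

end Alg
section Fin2
variable {κ : ℕ → ℕ} {a : ℕ → ℚ}

lemma NN_Geo (x : ℚ) (n : ℕ) : NN (Geo x n) :=
  NN_sum (fun _ _ => NN_Lpow _)

lemma NN_main (a : ℕ → ℚ) (κ : ℕ → ℕ) (r : ℕ)
    (hκ : ∀ i, 1 ≤ i → i ≤ r → 2 ≤ κ i)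
    (hchain : ∀ i, 1 ≤ i → i ≤ r → (κ i : ℚ) * a i = a (i - 1) + a (i + 1)) :
    ∀ m : ℕ, m + 1 ≤ r → NN (Apoly κ a (m+1)) ∧ NN (Dpoly κ a (m+1)) := by
  intro m
  induction m with
  | zero =>
    intro hle
    constructor
    · exact NN_sum (fun _ _ => NN_Lpow _)
    · rw [Dpoly_one]
      exact NN_sum (fun _ _ => NN_Lpow _)
  | succ m ih =>
    intro hle
    obtain ⟨ihA, ihD⟩ := ih (by omega)
    have hP1 := (grand a κ r hκ hchain (m+1) hle).1
    have hA : NN (Apoly κ a (m+1+1)) := by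
      have h0 : Apoly κ a (m+2)
          = (∑ j ∈ Finset.range (κ (m+2) - 2), Lpow ((j : ℚ) * a (m+2))) * Dpoly κ a (m+1)
            + Lpow (((κ (m+2) : ℚ) - 2) * a (m+2)) * Apoly κ a (m+1) := rfl
      rw [show m+1+1 = m+2 from rfl, h0]
      exact NN_add (NN_mul (NN_sum (fun _ _ => NN_Lpow _)) ihD) (NN_mul (NN_Lpow _) ihA)
    refine ⟨hA, ?_⟩
    rw [hP1]
    exact NN_add ihD (NN_mul (NN_Lpow _) hA)

end Fin2

/-- Part of the simultaneous induction proving Theorem 5.10(i):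
every coefficient of `A_r` is nonnegative. -/
theorem coeff_Apoly_nonneg (r : ℕ) (hr : 1 ≤ r) (a : ℕ → ℚ) (κ : ℕ → ℕ)
    (hκ : ∀ i, 1 ≤ i → i ≤ r → 2 ≤ κ i)
    (hchain : ∀ i, 1 ≤ i → i ≤ r → (κ i : ℚ) * a i = a (i - 1) + a (i + 1)) :
    ∀ q : ℚ, 0 ≤ (Apoly κ a r).coeff q := by
  obtain ⟨m, rfl⟩ : ∃ m, r = m + 1 := ⟨r - 1, by omega⟩
  exact (NN_main a κ (m+1) hκ hchain m le_rfl).1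
end

section
/- If moreover a_i > 0 for all 0 ≤ i ≤ r+1, then the constant term of D_r (the coefficient of L^0 in the determinant D_r) is equal to 1. (Theorem 5.10(ii), second assertion.) -/
open Finset

/-! ### Auxiliary machinery: elements with nonnegative support and constant terms -/

/-- Elements of `LaurentQ` whose support consists of nonnegative exponents. -/
def NNsupp (x : LaurentQ) : Prop := ∀ q : ℚ, q < 0 → x.coeff q = 0

lemma Lpow_apply (q p : ℚ) : (Lpow q).coeff p = if q = p then 1 else 0 := by
  classical
  simp [Lpow, Finsupp.single_apply]

lemma NNsupp_Lpow {q : ℚ} (hq : 0 ≤ q) : NNsupp (Lpow q) := by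
  intro p hp
  rw [Lpow_apply, if_neg]
  rintro rfl; exact absurd hp (not_lt.2 hq)

lemma NNsupp_one : NNsupp (1 : LaurentQ) := by
  have : (1 : LaurentQ) = Lpow 0 := by
    rw [AddMonoidAlgebra.one_def]; rfl
  rw [this]; exact NNsupp_Lpow le_rfl

lemma NNsupp_zero : NNsupp (0 : LaurentQ) := fun _ _ => rfl

lemma NNsupp_neg {x : LaurentQ} (hx : NNsupp x) : NNsupp (-x) := by
  intro q hq; rw [AddMonoidAlgebra.coeff_neg, Finsupp.neg_apply, hx q hq, neg_zero]

lemma NNsupp_sub {x y : LaurentQ} (hx : NNsupp x) (hy : NNsupp y) : NNsupp (x - y) := by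
  intro q hq; rw [AddMonoidAlgebra.coeff_sub, Finsupp.sub_apply, hx q hq, hy q hq, sub_zero]

lemma nonneg_of_mem_support {x : LaurentQ} (hx : NNsupp x) {q : ℚ} (hq : q ∈ x.coeff.support) :
    0 ≤ q := by
  by_contra h
  exact (Finsupp.mem_support_iff.1 hq) (hx q (not_le.1 h))

lemma NNsupp_mul {x y : LaurentQ} (hx : NNsupp x) (hy : NNsupp y) : NNsupp (x * y) := by
  classical
  intro p hp
  rw [AddMonoidAlgebra.coeff_mul, Finsupp.sum]
  refine Finset.sum_eq_zero fun q1 hq1 => ?_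
  rw [Finsupp.sum]
  refine Finset.sum_eq_zero fun q2 hq2 => ?_
  rw [if_neg]
  intro h
  have h1 := nonneg_of_mem_support hx hq1
  have h2 := nonneg_of_mem_support hy hq2
  nlinarith

lemma ct_mul {x y : LaurentQ} (hx : NNsupp x) (hy : NNsupp y) :
    (x * y).coeff 0 = x.coeff 0 * y.coeff 0 := by
  classical
  rw [AddMonoidAlgebra.coeff_mul, Finsupp.sum]
  have key : ∀ q1 ∈ x.coeff.support,
      (Finsupp.sum y.coeff fun q2 c => if q1 + q2 = 0 then x.coeff q1 * c else 0)
        = if q1 = 0 then x.coeff q1 * y.coeff 0 else 0 := by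
    intro q1 hq1
    have h1 := nonneg_of_mem_support hx hq1
    rw [Finsupp.sum]
    have step : ∀ q2 ∈ y.coeff.support,
        (if q1 + q2 = 0 then x.coeff q1 * y.coeff q2 else 0)
          = if q2 = 0 then (if q1 = 0 then x.coeff q1 * y.coeff q2 else 0) else 0 := by
      intro q2 hq2
      have h2 := nonneg_of_mem_support hy hq2
      by_cases hc : q1 + q2 = 0
      · have hq10 : q1 = 0 := le_antisymm (by linarith) h1
        have hq20 : q2 = 0 := by linarith
        simp [hc, hq10, hq20]
      · rw [if_neg hc]
        by_cases h20 : q2 = 0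
        · subst h20
          rw [if_pos rfl, if_neg]
          intro h10; exact hc (by rw [h10]; simp)
        · rw [if_neg h20]
    rw [Finset.sum_congr rfl step, Finset.sum_ite_eq' y.coeff.support 0]
    by_cases hmem : (0:ℚ) ∈ y.coeff.support
    · rw [if_pos hmem]
    · rw [if_neg hmem]
      have : y.coeff 0 = 0 := Finsupp.notMem_support_iff.1 hmem
      simp [this]
  rw [Finset.sum_congr rfl key, Finset.sum_ite_eq' x.coeff.support 0]
  by_cases hmem : (0:ℚ) ∈ x.coeff.support
  · rw [if_pos hmem]
  · rw [if_neg hmem]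
    have : x.coeff 0 = 0 := Finsupp.notMem_support_iff.1 hmem
    simp [this]

lemma ct_prod {ι : Type*} (s : Finset ι) (f : ι → LaurentQ) (h : ∀ i ∈ s, NNsupp (f i)) :
    NNsupp (∏ i ∈ s, f i) ∧ (∏ i ∈ s, f i).coeff 0 = ∏ i ∈ s, (f i).coeff 0 := by
  classical
  induction s using Finset.cons_induction with
  | empty =>
      refine ⟨by simpa using NNsupp_one, ?_⟩
      simp [AddMonoidAlgebra.one_def]
  | cons a s ha ih =>
      have hf := h a (Finset.mem_cons_self a s)
      have ihs := ih fun i hi => h i (Finset.mem_cons_of_mem hi)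
      rw [Finset.prod_cons, Finset.prod_cons]
      exact ⟨NNsupp_mul hf ihs.1, by rw [ct_mul hf ihs.1, ihs.2]⟩

lemma ct_Lpow_pos {q : ℚ} (hq : 0 < q) : (Lpow q).coeff 0 = 0 := by
  rw [Lpow_apply, if_neg]; exact ne_of_gt hq

lemma NNsupp_K {κ : ℕ → ℕ} {a : ℕ → ℚ} {i : ℕ} (hai : 0 ≤ a i) : NNsupp (Kpoly κ a i) := by
  intro p hp
  rw [Kpoly, AddMonoidAlgebra.coeff_sum, Finset.sum_apply']
  refine Finset.sum_eq_zero fun j _ => ?_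
  exact NNsupp_Lpow (by positivity) p hp

lemma ct_K {κ : ℕ → ℕ} {a : ℕ → ℚ} {i : ℕ} (hai : 0 < a i) (hκi : 1 ≤ κ i) :
    (Kpoly κ a i).coeff 0 = 1 := by
  classical
  rw [Kpoly, AddMonoidAlgebra.coeff_sum, Finset.sum_apply']
  have step : ∀ j ∈ Finset.range (κ i),
      (Lpow ((j:ℚ) * a i)).coeff 0 = if j = 0 then 1 else 0 := by
    intro j _
    rw [Lpow_apply]
    by_cases hj : j = 0
    · simp [hj]
    · rw [if_neg hj, if_neg]
      have : (0:ℚ) < (j:ℚ) * a i := by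
        have : 0 < (j:ℚ) := by exact_mod_cast Nat.pos_of_ne_zero hj
        positivity
      exact ne_of_gt this
  rw [Finset.sum_congr rfl step, Finset.sum_ite_eq' (Finset.range (κ i)) 0]
  rw [if_pos (Finset.mem_range.2 hκi)]

/-! ### Properties of the entries -/

lemma NNsupp_entry {r : ℕ} (a : ℕ → ℚ) (κ : ℕ → ℕ)
    (ha : ∀ i, i ≤ r + 1 → 0 < a i) (i j : Fin r) :
    NNsupp (entry κ a ((i : ℕ) + 1) ((j : ℕ) + 1)) := by
  have hi := i.isLt
  have hj := j.isLt
  unfold entry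
  split_ifs with c1 c2 c3 c4 c5 c6 c7 c8
  · exact NNsupp_K (le_of_lt (ha _ (by omega)))
  · exact NNsupp_neg (NNsupp_Lpow (le_of_lt (ha _ (by omega))))
  · exact NNsupp_neg (NNsupp_Lpow (le_of_lt (ha _ (by omega))))
  · exact NNsupp_sub (NNsupp_Lpow (le_of_lt (ha _ (by omega)))) NNsupp_one
  · exact NNsupp_zero
  · exact NNsupp_sub (NNsupp_Lpow (le_of_lt (ha _ (by omega)))) NNsupp_one
  · exact NNsupp_neg (NNsupp_Lpow (le_of_lt (ha _ (by omega))))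
  · exact NNsupp_neg (NNsupp_Lpow (le_of_lt (ha _ (by omega))))
  · exact NNsupp_zero

lemma ct_entry_diag {r : ℕ} (a : ℕ → ℚ) (κ : ℕ → ℕ)
    (ha : ∀ i, i ≤ r + 1 → 0 < a i) (hκ : ∀ i, 1 ≤ i → i ≤ r → 2 ≤ κ i) (i : Fin r) :
    (entry κ a ((i : ℕ) + 1) ((i : ℕ) + 1)).coeff 0 = 1 := by
  have hi := i.isLt
  unfold entry
  rw [if_pos rfl]
  exact ct_K (ha _ (by omega)) (by have := hκ ((i : ℕ) + 1) (by omega) (by omega); omega)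

lemma ct_entry_off {r : ℕ} (a : ℕ → ℚ) (κ : ℕ → ℕ)
    (ha : ∀ i, i ≤ r + 1 → 0 < a i) (i j : Fin r)
    (hij : i ≠ j)
    (h2 : ¬((i : ℕ) % 2 = 0 ∧ (j : ℕ) = (i : ℕ) + 2))
    (h3 : ¬((i : ℕ) % 2 = 1 ∧ (j : ℕ) + 2 = (i : ℕ))) :
    (entry κ a ((i : ℕ) + 1) ((j : ℕ) + 1)).coeff 0 = 0 := by
  have hi := i.isLt
  have hj := j.isLt
  unfold entry
  split_ifs with c1 c2 c3 c4 c5 c6 c7 c8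
  · exact absurd (Fin.ext (by omega)) hij
  · rw [AddMonoidAlgebra.coeff_neg, Finsupp.neg_apply, ct_Lpow_pos (ha _ (by omega)), neg_zero]
  · rw [AddMonoidAlgebra.coeff_neg, Finsupp.neg_apply, ct_Lpow_pos (ha _ (by omega)), neg_zero]
  · rw [Nat.odd_iff] at c2
    exact absurd ⟨by omega, by omega⟩ h2
  · rfl
  · rw [Nat.odd_iff] at c2
    exact absurd ⟨by omega, by omega⟩ h3
  · rw [AddMonoidAlgebra.coeff_neg, Finsupp.neg_apply, ct_Lpow_pos (ha _ (by omega)), neg_zero]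
  · rw [AddMonoidAlgebra.coeff_neg, Finsupp.neg_apply, ct_Lpow_pos (ha _ (by omega)), neg_zero]
  · rfl

/-! ### The sorting weight -/

/-- The weight used to sort indices so that the constant-term matrix becomes triangular. -/
def bwt (r : ℕ) : Fin r → ℕ := fun i => if (i : ℕ) % 2 = 0 then (i : ℕ) else 2 * r - (i : ℕ)

lemma bwt_inj (r : ℕ) : Function.Injective (bwt r) := by
  intro i j h
  have hi := i.isLt
  have hj := j.isLt
  unfold bwt at h
  split_ifs at h <;> (apply Fin.ext; omega)

/-- Theorem 5.10(ii), second assertion: if all `a_i > 0` for `0 ≤ i ≤ r+1`,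
then the constant term of `D_r` equals `1`. -/
theorem constantTerm_Dpoly_eq_one (r : ℕ) (hr : 1 ≤ r) (a : ℕ → ℚ) (κ : ℕ → ℕ)
    (hκ : ∀ i, 1 ≤ i → i ≤ r → 2 ≤ κ i)
    (hchain : ∀ i, 1 ≤ i → i ≤ r → (κ i : ℚ) * a i = a (i - 1) + a (i + 1))
    (ha : ∀ i, i ≤ r + 1 → 0 < a i) :
    (Dpoly κ a r).coeff 0 = 1 := by
  classical
  set N : Matrix (Fin r) (Fin r) ℤ :=
    Matrix.of (fun i j : Fin r => (entry κ a ((i : ℕ) + 1) ((j : ℕ) + 1)).coeff 0) with hN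
  -- Step 1: the constant term of the determinant is the determinant of constant terms
  have hDet : (Dpoly κ a r).coeff 0 = N.det := by
    rw [Dpoly, Matrix.det_apply, Matrix.det_apply, AddMonoidAlgebra.coeff_sum, Finset.sum_apply']
    refine Finset.sum_congr rfl fun σ _ => ?_
    rw [Units.smul_def, Units.smul_def, AddMonoidAlgebra.coeff_smul, Finsupp.smul_apply]
    congr 1
    exact (ct_prod Finset.univ _ (fun i _ => NNsupp_entry a κ ha (σ i) i)).2
  rw [hDet]
  -- Step 2: N is block-triangular with respect to the weight bwt
  have htri : ∀ i j : Fin r, bwt r j < bwt r i → N i j = 0 := by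
    intro i j hb
    have hi := i.isLt
    have hj := j.isLt
    refine ct_entry_off a κ ha i j ?_ ?_ ?_
    · rintro rfl; exact lt_irrefl _ hb
    · rintro ⟨hp, hji⟩
      unfold bwt at hb
      split_ifs at hb <;> omega
    · rintro ⟨hp, hji⟩
      unfold bwt at hb
      split_ifs at hb <;> omega
  -- Step 3: sort and conclude
  let e := Tuple.sort (bwt r)
  have hsm : StrictMono (bwt r ∘ e) :=
    (Tuple.monotone_sort (bwt r)).strictMono_of_injective
      ((bwt_inj r).comp e.injective)
  rw [← Matrix.det_submatrix_equiv_self e N]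
  rw [Matrix.det_of_upperTriangular (M := N.submatrix e e)
    (fun i j hij => htri _ _ (hsm hij))]
  refine Finset.prod_eq_one fun i _ => ?_
  exact ct_entry_diag a κ ha hκ (e i)
end
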